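/- Let ρ^N be the uniform mixture over all N permutations of the state |0⟩^{⊗(N−1)} ⊗ |1⟩ on N qubits. Then for every probability mixture τ = ∫ σ^⊗N dμ(σ) of i.i.d. states, the trace distance (1/2)‖ρ^N − τ‖₁ is at least some positive constant; in particular ‖ρ^N − σ^⊗N‖₁ ≥ 1/2 for every single-qubit density operator σ. -/

import Mathlib

open MeasureTheory
open scoped ComplexOrder Matrix

noncomputable instance : MeasurableSpace (Matrix (Fin 2) (Fin 2) ℂ) :=
  inferInstanceAs (MeasurableSpace (Fin 2 → Fin 2 → ℂ))

/-- Square root of a positive semidefinite matrix (removed from Mathlib; old definition). -/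
noncomputable def Matrix.PosSemidef.sqrt {n 𝕜 : Type*} [Fintype n] [RCLike 𝕜] [DecidableEq n]
    {A : Matrix n n 𝕜} (hA : A.PosSemidef) : Matrix n n 𝕜 :=
  hA.1.eigenvectorUnitary.1 * Matrix.diagonal ((↑) ∘ (√·) ∘ hA.1.eigenvalues) *
    (star hA.1.eigenvectorUnitary : Matrix n n 𝕜)

/-- The trace norm (Schatten 1-norm) of a complex square matrix. -/
noncomputable def traceNorm {n : Type*} [Fintype n] [DecidableEq n]
    (A : Matrix n n ℂ) : ℝ :=
  ((Matrix.posSemidef_conjTranspose_mul_self A).sqrt).trace.re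

/-- The n-fold tensor power of a single-qubit operator, as a matrix indexed
by classical strings. -/
noncomputable def tpow (σ : Matrix (Fin 2) (Fin 2) ℂ) (n : ℕ) :
    Matrix (Fin n → Fin 2) (Fin n → Fin 2) ℂ :=
  Matrix.of fun b c => ∏ i, σ (b i) (c i)

/-- The computational basis state with a single 1 in position i. -/
def eVec {N : ℕ} (i : Fin N) : Fin N → Fin 2 := fun j => if j = i then 1 else 0

/-- The uniform mixture over all N permutations of |0⟩^{⊗(N−1)} ⊗ |1⟩. -/
noncomputable def weightOneMix (N : ℕ) :
    Matrix (Fin N → Fin 2) (Fin N → Fin 2) ℂ :=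
  (N : ℂ)⁻¹ • ∑ i : Fin N, Matrix.single (eVec i) (eVec i) (1 : ℂ)


/-! On the weight-one strings `eVec i`, the diagonal of `weightOneMix N` is the uniform
distribution, while `σ^⊗N` puts total mass `N q (1 - q)^(N-1) ≤ 2/e < 3/4` there, `q = σ₁₁`;
integrating, the same holds for every mixture `τ` of i.i.d. states. As `|A| ± A ≥ 0` for
Hermitian `A`, the trace norm of `weightOneMix N - τ` dominates the `ℓ¹`-distance of the two
diagonals, which is at least twice the difference `1 - 3/4` of the masses. -/

section TraceNorm

open scoped MatrixOrder

theorem Matrix.PosSemidef.sqrt_eq_cfcSqrt {n 𝕜 : Type*} [Fintype n] [DecidableEq n] [RCLike 𝕜]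
    {A : Matrix n n 𝕜} (hA : A.PosSemidef) : hA.sqrt = CFC.sqrt A := by
  rw [CFC.sqrt_eq_cfc, cfc_nnreal_eq_real _ A, hA.1.cfc_eq]
  simp [Matrix.IsHermitian.cfc, Matrix.PosSemidef.sqrt, Function.comp_def,
    max_eq_left (hA.eigenvalues_nonneg _)]

theorem traceNorm_eq_re_trace_cfcAbs {n : Type*} [Fintype n] [DecidableEq n]
    (A : Matrix n n ℂ) : traceNorm A = (CFC.abs A).trace.re := by
  rw [traceNorm, Matrix.PosSemidef.sqrt_eq_cfcSqrt, CFC.abs, Matrix.star_eq_conjTranspose]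

theorem Matrix.IsHermitian.abs_re_apply_self_le {n : Type*} [Fintype n] [DecidableEq n]
    {A : Matrix n n ℂ} (hA : A.IsHermitian) (b : n) :
    |(A b b).re| ≤ (CFC.abs A b b).re := by
  have hneg := (CFC.abs_sub_self A).symm ▸ smul_nonneg zero_le_two (CFC.negPart_nonneg A)
  have hpos := (CFC.abs_add_self A).symm ▸ smul_nonneg zero_le_two (CFC.posPart_nonneg A)
  have h₁ := (Complex.nonneg_iff.mp ((Matrix.nonneg_iff_posSemidef.mp hneg).diag_nonneg (i := b))).1
  have h₂ := (Complex.nonneg_iff.mp ((Matrix.nonneg_iff_posSemidef.mp hpos).diag_nonneg (i := b))).1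
  simp only [Matrix.sub_apply, Matrix.add_apply, Complex.sub_re, Complex.add_re] at h₁ h₂
  exact abs_le.mpr ⟨by linarith, by linarith⟩

end TraceNorm

theorem Matrix.IsHermitian.sum_abs_re_diag_le_traceNorm {n : Type*} [Fintype n] [DecidableEq n]
    {A : Matrix n n ℂ} (hA : A.IsHermitian) : ∑ b, |(A b b).re| ≤ traceNorm A := by
  rw [traceNorm_eq_re_trace_cfcAbs, Matrix.trace, Complex.re_sum]
  exact Finset.sum_le_sum fun b _ => hA.abs_re_apply_self_le b

theorem two_mul_sum_sub_sum_le_sum_abs_sub {ι : Type*} [Fintype ι] {f g : ι → ℝ}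
    (h : ∑ i, f i = ∑ i, g i) (s : Finset ι) :
    2 * (∑ i ∈ s, f i - ∑ i ∈ s, g i) ≤ ∑ i, |f i - g i| := by
  classical
  have hs : ∑ i ∈ s, (f i - g i) ≤ ∑ i ∈ s, |f i - g i| :=
    Finset.sum_le_sum fun i _ => le_abs_self _
  have hsc : ∑ i ∈ sᶜ, (g i - f i) ≤ ∑ i ∈ sᶜ, |f i - g i| :=
    Finset.sum_le_sum fun i _ => neg_sub (f i) (g i) ▸ neg_le_abs _
  rw [← Finset.sum_add_sum_compl s, ← Finset.sum_add_sum_compl s] at h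
  rw [← Finset.sum_add_sum_compl s (fun i => |f i - g i|)]
  simp only [Finset.sum_sub_distrib] at hs hsc ⊢
  linarith

theorem Matrix.PosSemidef.norm_apply_self_le_trace {n : Type*} [Fintype n]
    {A : Matrix n n ℂ} (hA : A.PosSemidef) (b : n) : ‖A b b‖ ≤ A.trace.re := by
  have h := Finset.single_le_sum (fun c _ => hA.diag_nonneg (i := c)) (Finset.mem_univ b)
  rw [← Complex.re_eq_norm.2 hA.diag_nonneg]
  exact (Complex.le_def.mp h).1

theorem Matrix.PosSemidef.exists_diag_fin_two_eq {σ : Matrix (Fin 2) (Fin 2) ℂ}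
    (hσ : σ.PosSemidef) (htr : σ.trace = 1) :
    ∃ q : ℝ, 0 ≤ q ∧ q ≤ 1 ∧ σ 0 0 = ↑(1 - q) ∧ σ 1 1 = q := by
  have hq₁ : (σ 1 1).re ≤ 1 := by
    simpa [htr] using (Complex.re_le_norm _).trans (hσ.norm_apply_self_le_trace 1)
  have h₁ : σ 1 1 = (σ 1 1).re := (hσ.1.coe_re_apply_self 1).symm
  refine ⟨(σ 1 1).re, (Complex.nonneg_iff.mp hσ.diag_nonneg).1, hq₁, ?_, h₁⟩
  rw [Matrix.trace_fin_two] at htr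
  push_cast
  linear_combination htr - h₁

theorem natCast_mul_mul_one_sub_pow_le_exp_neg_one {q : ℝ} (hq₀ : 0 ≤ q) (hq₁ : q ≤ 1)
    (n : ℕ) : n * q * (1 - q) ^ n ≤ Real.exp (-1) := by
  calc n * q * (1 - q) ^ n ≤ n * q * Real.exp (-q) ^ n := by
        gcongr
        linarith [Real.add_one_le_exp (-q)]
    _ = (n * q) * Real.exp (-(n * q)) := by rw [← Real.exp_nat_mul]; ring_nf
    _ ≤ Real.exp (-1) := Real.mul_exp_neg_le_exp_neg_one _

theorem natCast_mul_mul_one_sub_pow_pred_le {q : ℝ} (hq₀ : 0 ≤ q) (hq₁ : q ≤ 1) {N : ℕ}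
    (hN : 2 ≤ N) : N * q * (1 - q) ^ (N - 1) ≤ 3 / 4 := by
  obtain ⟨n, rfl⟩ := Nat.exists_eq_add_of_le' (show 1 ≤ N by omega)
  have hn : (1 : ℝ) ≤ n := by exact_mod_cast (show 1 ≤ n by omega)
  have hbound := natCast_mul_mul_one_sub_pow_le_exp_neg_one hq₀ hq₁ n
  have hexp := Real.exp_neg_one_lt_d9
  have hnonneg : 0 ≤ q * (1 - q) ^ n := mul_nonneg hq₀ (pow_nonneg (by linarith) n)
  rw [Nat.add_sub_cancel]
  push_cast
  nlinarith

theorem eVec_injective (N : ℕ) : Function.Injective (eVec (N := N)) := fun i j h => by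
  by_contra hij
  simpa [eVec, hij] using congrFun h i

theorem weightOneMix_isHermitian (N : ℕ) : (weightOneMix N).IsHermitian := by
  simp [Matrix.IsHermitian, weightOneMix, Matrix.conjTranspose_sum]

theorem trace_weightOneMix {N : ℕ} (hN : N ≠ 0) : (weightOneMix N).trace = 1 := by
  simp [weightOneMix, hN]

theorem weightOneMix_apply_eVec_self {N : ℕ} (i : Fin N) :
    weightOneMix N (eVec i) (eVec i) = (N : ℂ)⁻¹ := by
  simp [weightOneMix, Matrix.sum_apply, Matrix.single_apply, (eVec_injective N).eq_iff]

theorem half_le_traceNorm_weightOneMix_sub {N : ℕ} (hN : N ≠ 0)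
    {τ : Matrix (Fin N → Fin 2) (Fin N → Fin 2) ℂ} (hτ : τ.IsHermitian) (htr : τ.trace.re = 1)
    (hmass : ∑ i, (τ (eVec i) (eVec i)).re ≤ 3 / 4) :
    1 / 2 ≤ traceNorm (weightOneMix N - τ) := by
  have hρ : ∑ i, (weightOneMix N (eVec i) (eVec i)).re = 1 := by
    simp [weightOneMix_apply_eVec_self, hN]
  have hsum : ∑ b, (weightOneMix N b b).re = ∑ b, (τ b b).re := by
    simp only [← Complex.re_sum]
    exact (congrArg Complex.re (trace_weightOneMix hN)).trans htr.symm
  have hdist := two_mul_sum_sub_sum_le_sum_abs_sub hsum (Finset.univ.map ⟨eVec, eVec_injective N⟩)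
  simp only [Finset.sum_map, Function.Embedding.coeFn_mk, hρ] at hdist
  have hnorm := ((weightOneMix_isHermitian N).sub hτ).sum_abs_re_diag_le_traceNorm
  simp only [Matrix.sub_apply, Complex.sub_re] at hnorm
  linarith

theorem conjTranspose_tpow (σ : Matrix (Fin 2) (Fin 2) ℂ) (N : ℕ) :
    (tpow σ N)ᴴ = tpow σᴴ N := by
  ext b c
  simp [tpow]

theorem Matrix.IsHermitian.tpow {σ : Matrix (Fin 2) (Fin 2) ℂ} (hσ : σ.IsHermitian) (N : ℕ) :
    (tpow σ N).IsHermitian := by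
  rw [Matrix.IsHermitian, conjTranspose_tpow, hσ.eq]

theorem trace_tpow (σ : Matrix (Fin 2) (Fin 2) ℂ) (N : ℕ) : (tpow σ N).trace = σ.trace ^ N := by
  simp only [Matrix.trace, Matrix.diag, tpow, Matrix.of_apply]
  rw [← Fin.prod_const, Finset.prod_univ_sum, Fintype.piFinset_univ]

theorem tpow_apply_eVec_self (σ : Matrix (Fin 2) (Fin 2) ℂ) {N : ℕ} (i : Fin N) :
    tpow σ N (eVec i) (eVec i) = σ 1 1 * σ 0 0 ^ (N - 1) := by
  rw [tpow, Matrix.of_apply, ← Finset.mul_prod_erase _ _ (Finset.mem_univ i),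
    Finset.prod_congr rfl (g := fun _ => σ 0 0) fun j hj => by
      simp [eVec, Finset.ne_of_mem_erase hj]]
  simp [eVec, Finset.card_erase_of_mem]

theorem norm_tpow_apply_self_le_one {σ : Matrix (Fin 2) (Fin 2) ℂ} (hσ : σ.PosSemidef)
    (htr : σ.trace = 1) {N : ℕ} (b : Fin N → Fin 2) : ‖tpow σ N b b‖ ≤ 1 := by
  rw [tpow, Matrix.of_apply, norm_prod]
  exact Finset.prod_le_one (fun _ _ => norm_nonneg _)
    fun i _ => by simpa [htr] using hσ.norm_apply_self_le_trace (b i)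

theorem measurable_tpow_apply (N : ℕ) (b c : Fin N → Fin 2) :
    Measurable fun σ : Matrix (Fin 2) (Fin 2) ℂ => tpow σ N b c := by
  unfold tpow
  fun_prop

theorem sum_re_tpow_apply_eVec_self_le {σ : Matrix (Fin 2) (Fin 2) ℂ} (hσ : σ.PosSemidef)
    (htr : σ.trace = 1) {N : ℕ} (hN : 2 ≤ N) :
    ∑ i : Fin N, (tpow σ N (eVec i) (eVec i)).re ≤ 3 / 4 := by
  obtain ⟨q, hq₀, hq₁, h₀, h₁⟩ := hσ.exists_diag_fin_two_eq htr
  simp only [tpow_apply_eVec_self, h₀, h₁, ← Complex.ofReal_pow, ← Complex.ofReal_mul,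
    Complex.ofReal_re, Finset.sum_const, Finset.card_univ, Fintype.card_fin, nsmul_eq_mul]
  simpa [mul_assoc] using natCast_mul_mul_one_sub_pow_pred_le hq₀ hq₁ hN

section Mixture

variable {N : ℕ} {μ : Measure (Matrix (Fin 2) (Fin 2) ℂ)}
  {τ : Matrix (Fin N → Fin 2) (Fin N → Fin 2) ℂ}

theorem isHermitian_of_apply_eq_integral_tpow (hμ : ∀ᵐ σ ∂μ, σ.IsHermitian)
    (hτ : ∀ b c, τ b c = ∫ σ, tpow σ N b c ∂μ) : τ.IsHermitian := by
  ext b c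
  rw [Matrix.conjTranspose_apply, hτ, hτ, Complex.star_def, ← integral_conj]
  refine integral_congr_ae ?_
  filter_upwards [hμ] with σ hσ
  exact congrFun (congrFun (hσ.tpow N) b) c

theorem integrable_tpow_apply_self [IsFiniteMeasure μ]
    (hμ : ∀ᵐ σ ∂μ, σ.PosSemidef ∧ σ.trace = 1) (b : Fin N → Fin 2) :
    Integrable (fun σ => tpow σ N b b) μ :=
  (integrable_const (1 : ℝ)).mono' (measurable_tpow_apply N b b).aestronglyMeasurable
    (by filter_upwards [hμ] with σ hσ using by simpa using norm_tpow_apply_self_le_one hσ.1 hσ.2 b)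

theorem integrable_re_tpow_apply_self [IsFiniteMeasure μ]
    (hμ : ∀ᵐ σ ∂μ, σ.PosSemidef ∧ σ.trace = 1) (b : Fin N → Fin 2) :
    Integrable (fun σ => (tpow σ N b b).re) μ :=
  (integrable_tpow_apply_self hμ b).re

theorem sum_re_apply_self_eq_integral_tpow [IsFiniteMeasure μ]
    (hμ : ∀ᵐ σ ∂μ, σ.PosSemidef ∧ σ.trace = 1) (hτ : ∀ b c, τ b c = ∫ σ, tpow σ N b c ∂μ)
    {ι : Type*} [Fintype ι] (v : ι → Fin N → Fin 2) :
    ∑ i, (τ (v i) (v i)).re = ∫ σ, ∑ i, (tpow σ N (v i) (v i)).re ∂μ := by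
  rw [integral_finsetSum _ fun i _ => integrable_re_tpow_apply_self hμ (v i)]
  refine Finset.sum_congr rfl fun i _ => ?_
  rw [hτ]
  exact (integral_re (integrable_tpow_apply_self hμ (v i))).symm

theorem re_trace_eq_one_of_apply_eq_integral_tpow [IsProbabilityMeasure μ]
    (hμ : ∀ᵐ σ ∂μ, σ.PosSemidef ∧ σ.trace = 1) (hτ : ∀ b c, τ b c = ∫ σ, tpow σ N b c ∂μ) :
    τ.trace.re = 1 := by
  calc τ.trace.re = ∫ σ, ∑ b, (tpow σ N b b).re ∂μ := by
        rw [Matrix.trace, Complex.re_sum]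
        exact sum_re_apply_self_eq_integral_tpow hμ hτ id
    _ = ∫ _, (1 : ℝ) ∂μ := by
        refine integral_congr_ae ?_
        filter_upwards [hμ] with σ hσ
        rw [← Complex.re_sum]
        change (tpow σ N).trace.re = 1
        rw [trace_tpow, hσ.2, one_pow, Complex.one_re]
    _ = 1 := by simp

theorem sum_re_apply_eVec_self_le_of_apply_eq_integral_tpow [IsProbabilityMeasure μ]
    (hN : 2 ≤ N) (hμ : ∀ᵐ σ ∂μ, σ.PosSemidef ∧ σ.trace = 1)
    (hτ : ∀ b c, τ b c = ∫ σ, tpow σ N b c ∂μ) :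
    ∑ i, (τ (eVec i) (eVec i)).re ≤ 3 / 4 := by
  rw [sum_re_apply_self_eq_integral_tpow hμ hτ eVec]
  calc ∫ σ, ∑ i, (tpow σ N (eVec i) (eVec i)).re ∂μ ≤ ∫ _, (3 / 4 : ℝ) ∂μ := by
        refine integral_mono_ae (integrable_finsetSum _ fun i _ =>
          integrable_re_tpow_apply_self hμ (eVec i)) (integrable_const _) ?_
        filter_upwards [hμ] with σ hσ using sum_re_tpow_apply_eVec_self_le hσ.1 hσ.2 hN
    _ = 3 / 4 := by simp

end Mixture

/-- The uniform mixture over the N permutations of |0⟩^{⊗(N−1)}⊗|1⟩ is far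
from every mixture of i.i.d. states: its trace distance to any probability
mixture ∫ σ^⊗N dμ(σ) of i.i.d. states is at least some positive constant;
in particular ‖ρ^N − σ^⊗N‖₁ ≥ 1/2 for every single-qubit density operator σ. -/
theorem weightOneMix_far_from_iid {N : ℕ} (hN : 2 ≤ N) :
    (∃ c : ℝ, 0 < c ∧
      ∀ (μ : Measure (Matrix (Fin 2) (Fin 2) ℂ)), IsProbabilityMeasure μ →
        (∀ᵐ σ ∂μ, σ.PosSemidef ∧ σ.trace = 1) →
        ∀ τ : Matrix (Fin N → Fin 2) (Fin N → Fin 2) ℂ,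
          (∀ b c, τ b c = ∫ σ, tpow σ N b c ∂μ) →
          c ≤ (1 / 2) * traceNorm (weightOneMix N - τ)) ∧
      ∀ σ : Matrix (Fin 2) (Fin 2) ℂ, σ.PosSemidef → σ.trace = 1 →
        (1 : ℝ) / 2 ≤ traceNorm (weightOneMix N - tpow σ N) := by
  have hN₀ : N ≠ 0 := by omega
  refine ⟨⟨1 / 4, by norm_num, fun μ _ hμ τ hτ => ?_⟩, fun σ hσ htr => ?_⟩
  · have hhalf := half_le_traceNorm_weightOneMix_sub hN₀
      (isHermitian_of_apply_eq_integral_tpow (hμ.mono fun σ hσ => hσ.1.1) hτ)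
      (re_trace_eq_one_of_apply_eq_integral_tpow hμ hτ)
      (sum_re_apply_eVec_self_le_of_apply_eq_integral_tpow hN hμ hτ)
    linarith
  · exact half_le_traceNorm_weightOneMix_sub hN₀ (hσ.1.tpow N)
      (by rw [trace_tpow, htr, one_pow, Complex.one_re])
      (sum_re_tpow_apply_eVec_self_le hσ htr hN)
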